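/- arXiv:1506.01468 — 7 statements merged into one kernel-verified Lean document; each statement's English description precedes it below -/
import Mathlib

section
/- Let λ, μ, μ₀ > 0 satisfy μ·μ₀ < λ·(λ+μ₀). Then there exist reals a, b with 0 < a < 1 and 0 < b < 1 such that λ(1−ab) − μ(b⁻¹−1) > 0 and λ(1−b) − μ₀(a⁻¹−1) > 0. -/
/-!
Put `t = 1 - b`. The second inequality says exactly that `a > μ₀ / (μ₀ + λ t)`, and the first that
`a < (λ b - μ t) / (λ b²)`. Cross-multiplying, the lower bound is below the upper one iff
`t ((λ (λ + μ₀) - μ μ₀) - t λ (λ + μ + μ₀)) > 0`, which holds for all small `t > 0` precisely because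
`μ μ₀ < λ (λ + μ₀)`; any `a < 1` strictly between the two bounds then works.
-/

lemma mul_inv_sub_one_lt_of_div_lt {c d a : ℝ} (hc : 0 < c) (hd : 0 < d)
    (ha : d / (d + c) < a) : d * (a⁻¹ - 1) < c := by
  have ha0 : 0 < a := (div_pos hd (add_pos hd hc)).trans ha
  rw [div_lt_iff₀ (add_pos hd hc)] at ha
  rw [mul_sub, mul_one, ← div_eq_mul_inv, sub_lt_iff_lt_add, div_lt_iff₀ ha0]
  linarith

lemma mul_inv_sub_one_lt_mul_one_sub_mul {lam mu a b : ℝ} (hlam : 0 < lam) (hb : 0 < b)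
    (ha : a < (lam * b - mu * (1 - b)) / (lam * b ^ 2)) :
    mu * (b⁻¹ - 1) < lam * (1 - a * b) := by
  rw [lt_div_iff₀ (by positivity)] at ha
  have hab : mu * (b⁻¹ - 1) * b = mu * (1 - b) := by field_simp
  nlinarith

lemma div_lt_div_of_one_sub_mul_lt_gap {lam mu mu0 b : ℝ} (hlam : 0 < lam) (hmu0 : 0 < mu0)
    (hb0 : 0 < b) (hb1 : b < 1)
    (hb : (1 - b) * (lam * (lam + mu + mu0)) < lam * (lam + mu0) - mu * mu0) :
    mu0 / (mu0 + lam * (1 - b)) < (lam * b - mu * (1 - b)) / (lam * b ^ 2) := by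
  have ht0 : 0 < 1 - b := sub_pos.2 hb1
  rw [div_lt_div_iff₀ (add_pos hmu0 (mul_pos hlam ht0)) (by positivity)]
  have hgap : (lam * b - mu * (1 - b)) * (mu0 + lam * (1 - b)) - mu0 * (lam * b ^ 2)
      = (1 - b) * ((lam * (lam + mu0) - mu * mu0) - (1 - b) * (lam * (lam + mu + mu0))) := by
    ring
  nlinarith [mul_pos ht0 (sub_pos.2 hb)]

theorem stmt_2 (lam mu mu0 : ℝ) (hlam : 0 < lam) (hmu : 0 < mu) (hmu0 : 0 < mu0)
    (h : mu * mu0 < lam * (lam + mu0)) :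
    ∃ a b : ℝ, 0 < a ∧ a < 1 ∧ 0 < b ∧ b < 1 ∧
      0 < lam * (1 - a * b) - mu * (b⁻¹ - 1) ∧
      0 < lam * (1 - b) - mu0 * (a⁻¹ - 1) := by
  have hδ : 0 < (lam * (lam + mu0) - mu * mu0) / (lam * (lam + mu + mu0)) := by
    apply div_pos <;> nlinarith
  obtain ⟨b, hbδ, hb1⟩ := exists_between (sub_lt_self 1 hδ)
  have hb : (1 - b) * (lam * (lam + mu + mu0)) < lam * (lam + mu0) - mu * mu0 :=
    (lt_div_iff₀ (by positivity)).1 (by linarith)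
  have hb0 : 0 < b := by nlinarith [mul_pos hmu hmu0, mul_pos hlam hmu]
  have hc : 0 < lam * (1 - b) := mul_pos hlam (sub_pos.2 hb1)
  have hL1 : mu0 / (mu0 + lam * (1 - b)) < 1 := (div_lt_one (add_pos hmu0 hc)).2 (by linarith)
  obtain ⟨a, hLa, haU⟩ :=
    exists_between (lt_min (div_lt_div_of_one_sub_mul_lt_gap hlam hmu0 hb0 hb1 hb) hL1)
  refine ⟨a, b, (div_pos hmu0 (add_pos hmu0 hc)).trans hLa,
    haU.trans_le (min_le_right _ _), hb0, hb1, ?_, ?_⟩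
  · exact sub_pos.2 (mul_inv_sub_one_lt_mul_one_sub_mul hlam hb0
      (haU.trans_le (min_le_left _ _)))
  · exact sub_pos.2 (mul_inv_sub_one_lt_of_div_lt hc hmu0 hLa)
end

section
/- Let λ, μ, μ₀ > 0 with μ·μ₀ > λ·(λ+μ₀). Then there exist positive reals a, b with a·b > 1 such that λ + μ₀ − μ/b > 0 and λ + μ − λ(b + ab) − μ₀/a > 0. -/
/-! Put `c = a * b`. For fixed `c > 1` the two conditions confine `b` to the interval
`μ / (λ + μ₀) < b < c (λ + μ - λ c) / (λ c + μ₀)`, whose endpoints coincide at `c = 1`.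
Cross-multiplied, the upper minus the lower endpoint is `(c - 1) (μ μ₀ - λ (λ + μ₀) c)`, which is
positive for `1 < c < μ μ₀ / (λ (λ + μ₀))`; such a `c` exists by the hypothesis. -/

section

variable {lam mu mu0 c b : ℝ}

lemma div_lt_mul_sub_div_of_one_lt (hlam : 0 < lam) (hmu0 : 0 < mu0) (hc : 1 < c)
    (hcA : lam * (lam + mu0) * c < mu * mu0) :
    mu / (lam + mu0) < c * (lam + mu - lam * c) / (lam * c + mu0) := by
  have hgap : (lam + mu0) * (c * (lam + mu - lam * c)) - mu * (lam * c + mu0)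
      = (c - 1) * (mu * mu0 - lam * (lam + mu0) * c) := by ring
  rw [div_lt_div_iff₀ (by positivity) (by positivity)]
  nlinarith [mul_pos (sub_pos.2 hc) (sub_pos.2 hcA)]

lemma rate_conditions_of_mem_interval (hlam : 0 < lam) (hmu0 : 0 < mu0) (hc : 1 < c)
    (hb : 0 < b) (hb_low : mu / (lam + mu0) < b)
    (hb_up : b < c * (lam + mu - lam * c) / (lam * c + mu0)) :
    0 < lam + mu0 - mu / b ∧ 0 < lam + mu - lam * (b + c / b * b) - mu0 / (c / b) := by
  have hc0 : 0 < c := by linarith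
  rw [div_lt_iff₀ (by positivity), mul_comm] at hb_low
  rw [lt_div_iff₀ (by positivity)] at hb_up
  refine ⟨?_, ?_⟩
  · rw [sub_pos, div_lt_iff₀ hb]
    exact hb_low
  · rw [div_mul_cancel₀ c hb.ne', div_div_eq_mul_div, sub_pos, div_lt_iff₀ hc0]
    nlinarith

end

theorem stmt_6 (lam mu mu0 : ℝ) (hlam : 0 < lam) (hmu : 0 < mu) (hmu0 : 0 < mu0)
    (h : mu * mu0 > lam * (lam + mu0)) :
    ∃ a b : ℝ, 0 < a ∧ 0 < b ∧ 1 < a * b ∧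
      0 < lam + mu0 - mu / b ∧
      0 < lam + mu - lam * (b + a * b) - mu0 / a := by
  have hA : 0 < lam * (lam + mu0) := by positivity
  obtain ⟨c, hc, hcA⟩ := exists_between ((one_lt_div hA).2 h)
  rw [lt_div_iff₀ hA, mul_comm] at hcA
  obtain ⟨b, hb_low, hb_up⟩ := exists_between (div_lt_mul_sub_div_of_one_lt hlam hmu0 hc hcA)
  have hb : 0 < b := lt_trans (by positivity) hb_low
  refine ⟨c / b, b, by positivity, hb, ?_,
    rate_conditions_of_mem_interval hlam hmu0 hc hb hb_low hb_up⟩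
  rwa [div_mul_cancel₀ c hb.ne']
end

section
/- Let λ, μ, μ₀ > 0, let x ∈ (1, μμ₀/(λ(λ+μ₀))), let b satisfy μ/(λ+μ₀) < b < (λ+μ−xλ)/(λ+μ₀/x), and set a = x/b. Then λ + μ₀ − μ/b > 0 and λ + μ − λ(b + ab) − μ₀/a > 0. -/
/-! Both inequalities are the bounds on `b` with denominators cleared: the lower bound gives the
first directly, and since `a * b = x` the second expression equals
`(λ + μ - xλ) - b (λ + μ₀ / x)`, which the upper bound makes positive. -/

theorem sub_div_pos_of_div_lt {𝕜 : Type*} [Field 𝕜] [LinearOrder 𝕜] [IsStrictOrderedRing 𝕜]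
    {c m b : 𝕜} (hc : 0 < c) (hb : 0 < b) (h : m / c < b) : 0 < c - m / b := by
  rw [div_lt_iff₀ hc] at h
  rw [sub_pos, div_lt_iff₀ hb]
  linarith

theorem stmt_7_general (lam mu mu0 : ℝ) (hlam : 0 < lam) (hmu : 0 < mu) (hmu0 : 0 < mu0)
    (x : ℝ) (hx1 : 1 < x)
    (b : ℝ) (hb1 : mu / (lam + mu0) < b)
    (hb2 : b < (lam + mu - x * lam) / (lam + mu0 / x)) :
    0 < lam + mu0 - mu / b ∧
      0 < lam + mu - lam * (b + (x / b) * b) - mu0 / (x / b) := by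
  have hx : 0 < x := one_pos.trans hx1
  have hb : 0 < b := (div_pos hmu (by positivity)).trans hb1
  refine ⟨sub_div_pos_of_div_lt (by positivity) hb hb1, ?_⟩
  have hsplit : lam + mu - lam * (b + (x / b) * b) - mu0 / (x / b)
      = (lam + mu - x * lam) - b * (lam + mu0 / x) := by
    field_simp
    ring
  rw [hsplit, sub_pos]
  exact (lt_div_iff₀ (by positivity)).mp hb2

theorem stmt_7 (lam mu mu0 : ℝ) (hlam : 0 < lam) (hmu : 0 < mu) (hmu0 : 0 < mu0)
    (x : ℝ) (hx1 : 1 < x) (hx2 : x < mu * mu0 / (lam * (lam + mu0)))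
    (b : ℝ) (hb1 : mu / (lam + mu0) < b)
    (hb2 : b < (lam + mu - x * lam) / (lam + mu0 / x)) :
    0 < lam + mu0 - mu / b ∧
      0 < lam + mu - lam * (b + (x / b) * b) - mu0 / (x / b) :=
  stmt_7_general lam mu mu0 hlam hmu hmu0 x hx1 b hb1 hb2
end

section
/- Let λ, μ, μ₀ > 0 and let a, b ∈ (0,1) satisfy ζ* := min(λ(1−ab) − μ(b⁻¹−1), λ(1−b) − μ₀(a⁻¹−1)) > 0. With δ₁ = 1, δ_{2k+1} = a^k b^k, δ_{2k} = a^{k−1} b^k, the logarithmic norm of A = Qᵀ in the weighted norm ‖p‖_{1Δ} = Σ δ_i |p_i| satisfies γ(A)_{1Δ} = −ζ* < 0, where γ(A)_{1Δ} = sup_i ( a_{ii} + Σ_{j≠i} (δ_j/δ_i) a_{ji} ). -/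
/-- Intensity matrix of the constant-retrial-rate M/M/1 retrial queue, with
states enumerated from 1; row/column 0 is unused and set to zero. -/
noncomputable def Qmat (lam mu mu0 : ℝ) (i j : ℕ) : ℝ :=
  if i = 0 ∨ j = 0 then 0
  else if i = 1 then (if j = 1 then -lam else if j = 2 then lam else 0)
  else if i % 2 = 0 then
    (if j = i then -(lam + mu) else if j = i + 2 then lam
      else if j = i - 1 then mu else 0)
  else
    (if j = i then -(lam + mu0) else if j = i - 1 then mu0
      else if j = i + 1 then lam else 0)

/-- Diagonal weights: δ 1 = 1, δ (2k+1) = aᵏbᵏ, δ (2k) = a^(k-1)bᵏ (k ≥ 1). -/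
noncomputable def delta (a b : ℝ) (n : ℕ) : ℝ :=
  if n % 2 = 1 then a ^ (n / 2) * b ^ (n / 2) else a ^ (n / 2 - 1) * b ^ (n / 2)

noncomputable def Ebody (lam mu mu0 a b : ℝ) (i : ℕ) : ℝ :=
  Qmat lam mu mu0 i i + ∑' j : {n : ℕ // 1 ≤ n ∧ n ≠ i},
    (delta a b j.val / delta a b i) * Qmat lam mu mu0 i j.val

lemma Qmat_even_zero (lam mu mu0 : ℝ) (m j : ℕ) (h1 : j ≠ 2*m+2) (h2 : j ≠ 2*m+1)
    (h3 : j ≠ 2*m+4) : Qmat lam mu mu0 (2*m+2) j = 0 := by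
  unfold Qmat; split_ifs <;> first | rfl | omega | tauto

lemma Qmat_odd_zero (lam mu mu0 : ℝ) (m j : ℕ) (h1 : j ≠ 2*m+3) (h2 : j ≠ 2*m+2)
    (h3 : j ≠ 2*m+4) : Qmat lam mu mu0 (2*m+3) j = 0 := by
  unfold Qmat; split_ifs <;> first | rfl | omega | tauto

lemma Qmat_one_zero (lam mu mu0 : ℝ) (j : ℕ) (h1 : j ≠ 1) (h2 : j ≠ 2) :
    Qmat lam mu mu0 1 j = 0 := by
  unfold Qmat; split_ifs <;> first | rfl | omega | tauto

lemma Qmat_even_diag (lam mu mu0 : ℝ) (m : ℕ) :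
    Qmat lam mu mu0 (2*m+2) (2*m+2) = -(lam+mu) := by
  unfold Qmat; split_ifs <;> first | rfl | omega | tauto

lemma Qmat_even_lo (lam mu mu0 : ℝ) (m : ℕ) :
    Qmat lam mu mu0 (2*m+2) (2*m+1) = mu := by
  unfold Qmat; split_ifs <;> first | rfl | omega | tauto

lemma Qmat_even_hi (lam mu mu0 : ℝ) (m : ℕ) :
    Qmat lam mu mu0 (2*m+2) (2*m+4) = lam := by
  unfold Qmat; split_ifs <;> first | rfl | omega | tauto

lemma Qmat_odd_diag (lam mu mu0 : ℝ) (m : ℕ) :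
    Qmat lam mu mu0 (2*m+3) (2*m+3) = -(lam+mu0) := by
  unfold Qmat; split_ifs <;> first | rfl | omega | tauto

lemma Qmat_odd_lo (lam mu mu0 : ℝ) (m : ℕ) :
    Qmat lam mu mu0 (2*m+3) (2*m+2) = mu0 := by
  unfold Qmat; split_ifs <;> first | rfl | omega | tauto

lemma Qmat_odd_hi (lam mu mu0 : ℝ) (m : ℕ) :
    Qmat lam mu mu0 (2*m+3) (2*m+4) = lam := by
  unfold Qmat; split_ifs <;> first | rfl | omega | tauto

lemma Qmat_one_diag (lam mu mu0 : ℝ) : Qmat lam mu mu0 1 1 = -lam := by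
  unfold Qmat; split_ifs <;> first | rfl | omega | tauto

lemma Qmat_one_two (lam mu mu0 : ℝ) : Qmat lam mu mu0 1 2 = lam := by
  unfold Qmat; split_ifs <;> first | rfl | omega | tauto

lemma delta_oddv (a b : ℝ) (m : ℕ) : delta a b (2*m+1) = a^m * b^m := by
  unfold delta
  have h1 : (2*m+1) % 2 = 1 := by omega
  have h2 : (2*m+1)/2 = m := by omega
  rw [if_pos h1, h2]

lemma delta_evenv (a b : ℝ) (m : ℕ) : delta a b (2*m+2) = a^m * b^(m+1) := by
  unfold delta
  have h1 : ¬((2*m+2) % 2 = 1) := by omega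
  have h2 : (2*m+2)/2 = m+1 := by omega
  rw [if_neg h1, h2]; norm_num

lemma Ebody_one (lam mu mu0 a b : ℝ) :
    Ebody lam mu mu0 a b 1 = -lam + b * lam := by
  unfold Ebody
  have hv : ∀ j : {n : ℕ // 1 ≤ n ∧ n ≠ 1},
      j ∉ ({⟨2, by omega⟩} : Finset {n : ℕ // 1 ≤ n ∧ n ≠ 1}) →
      (delta a b j.val / delta a b 1) * Qmat lam mu mu0 1 j.val = 0 := by
    rintro ⟨j, hj1, hj2⟩ hj
    simp only [Finset.mem_singleton, Subtype.ext_iff] at hj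
    rw [Qmat_one_zero lam mu mu0 j hj2 hj, mul_zero]
  have hsum := tsum_eq_sum (L := SummationFilter.unconditional _)
    (s := ({⟨2, by omega⟩} : Finset {n : ℕ // 1 ≤ n ∧ n ≠ 1})) hv
  rw [hsum, Finset.sum_singleton, Qmat_one_diag, Qmat_one_two]
  have d1 : delta a b 1 = 1 := by
    have := delta_oddv a b 0; norm_num at this; exact this
  have d2 : delta a b 2 = b := by
    have := delta_evenv a b 0; norm_num at this; exact this
  rw [d1, d2]; ring

lemma Ebody_even (lam mu mu0 a b : ℝ) (ha : a ≠ 0) (hb : b ≠ 0) (m : ℕ) :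
    Ebody lam mu mu0 a b (2*m+2) = -(lam+mu) + b⁻¹ * mu + (a*b) * lam := by
  unfold Ebody
  have hv : ∀ j : {n : ℕ // 1 ≤ n ∧ n ≠ 2*m+2},
      j ∉ ({⟨2*m+1, by omega⟩, ⟨2*m+4, by omega⟩} :
        Finset {n : ℕ // 1 ≤ n ∧ n ≠ 2*m+2}) →
      (delta a b j.val / delta a b (2*m+2)) * Qmat lam mu mu0 (2*m+2) j.val = 0 := by
    rintro ⟨j, hj1, hj2⟩ hj
    simp only [Finset.mem_insert, Finset.mem_singleton, Subtype.ext_iff, not_or] at hj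
    rw [Qmat_even_zero lam mu mu0 m j hj2 hj.1 hj.2, mul_zero]
  have hsum := tsum_eq_sum (L := SummationFilter.unconditional _)
    (s := ({⟨2*m+1, by omega⟩, ⟨2*m+4, by omega⟩} : Finset {n : ℕ // 1 ≤ n ∧ n ≠ 2*m+2})) hv
  have hnotmem : (⟨2*m+1, by omega⟩ : {n : ℕ // 1 ≤ n ∧ n ≠ 2*m+2}) ∉
      ({⟨2*m+4, by omega⟩} : Finset {n : ℕ // 1 ≤ n ∧ n ≠ 2*m+2}) := by
    simp only [Finset.mem_singleton, Subtype.ext_iff]; omega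
  rw [hsum, Finset.sum_insert hnotmem, Finset.sum_singleton]
  have d4 : delta a b (2*m+4) = a^(m+1) * b^(m+2) := by
    rw [show 2*m+4 = 2*(m+1)+2 by ring]; exact delta_evenv a b (m+1)
  rw [Qmat_even_diag, Qmat_even_lo, Qmat_even_hi, delta_oddv, delta_evenv, d4]
  field_simp
  ring

lemma Ebody_odd (lam mu mu0 a b : ℝ) (ha : a ≠ 0) (hb : b ≠ 0) (m : ℕ) :
    Ebody lam mu mu0 a b (2*m+3) = -(lam+mu0) + a⁻¹ * mu0 + b * lam := by
  unfold Ebody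
  have hv : ∀ j : {n : ℕ // 1 ≤ n ∧ n ≠ 2*m+3},
      j ∉ ({⟨2*m+2, by omega⟩, ⟨2*m+4, by omega⟩} :
        Finset {n : ℕ // 1 ≤ n ∧ n ≠ 2*m+3}) →
      (delta a b j.val / delta a b (2*m+3)) * Qmat lam mu mu0 (2*m+3) j.val = 0 := by
    rintro ⟨j, hj1, hj2⟩ hj
    simp only [Finset.mem_insert, Finset.mem_singleton, Subtype.ext_iff, not_or] at hj
    rw [Qmat_odd_zero lam mu mu0 m j hj2 hj.1 hj.2, mul_zero]
  have hsum := tsum_eq_sum (L := SummationFilter.unconditional _)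
    (s := ({⟨2*m+2, by omega⟩, ⟨2*m+4, by omega⟩} : Finset {n : ℕ // 1 ≤ n ∧ n ≠ 2*m+3})) hv
  have hnotmem : (⟨2*m+2, by omega⟩ : {n : ℕ // 1 ≤ n ∧ n ≠ 2*m+3}) ∉
      ({⟨2*m+4, by omega⟩} : Finset {n : ℕ // 1 ≤ n ∧ n ≠ 2*m+3}) := by
    simp only [Finset.mem_singleton, Subtype.ext_iff]; omega
  rw [hsum, Finset.sum_insert hnotmem, Finset.sum_singleton]
  have d3 : delta a b (2*m+3) = a^(m+1) * b^(m+1) := by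
    rw [show 2*m+3 = 2*(m+1)+1 by ring]; exact delta_oddv a b (m+1)
  have d4 : delta a b (2*m+4) = a^(m+1) * b^(m+2) := by
    rw [show 2*m+4 = 2*(m+1)+2 by ring]; exact delta_evenv a b (m+1)
  rw [Qmat_odd_diag, Qmat_odd_lo, Qmat_odd_hi, delta_evenv, d3, d4]
  field_simp
  ring

theorem stmt_15 (lam mu mu0 : ℝ) (hlam : 0 < lam) (hmu : 0 < mu) (hmu0 : 0 < mu0)
    (a b : ℝ) (ha : a ∈ Set.Ioo (0:ℝ) 1) (hb : b ∈ Set.Ioo (0:ℝ) 1)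
    (hzeta : 0 < min (lam * (1 - a * b) - mu * (b⁻¹ - 1))
        (lam * (1 - b) - mu0 * (a⁻¹ - 1))) :
    (⨆ i : {n : ℕ // 1 ≤ n},
        ((fun i j => Qmat lam mu mu0 j i) i.val i.val +
          ∑' j : {n : ℕ // 1 ≤ n ∧ n ≠ i.val},
            (delta a b j.val / delta a b i.val) *
              (fun i j => Qmat lam mu mu0 j i) j.val i.val))
      = -(min (lam * (1 - a * b) - mu * (b⁻¹ - 1))
            (lam * (1 - b) - mu0 * (a⁻¹ - 1))) := by
  obtain ⟨ha0, ha1⟩ := ha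
  obtain ⟨hb0, hb1⟩ := hb
  have ha' : a ≠ 0 := ne_of_gt ha0
  have hb' : b ≠ 0 := ne_of_gt hb0
  set c1 := lam * (1 - a * b) - mu * (b⁻¹ - 1) with hc1
  set c2 := lam * (1 - b) - mu0 * (a⁻¹ - 1) with hc2
  have hE1 : Ebody lam mu mu0 a b 1 = -lam + b * lam := Ebody_one lam mu mu0 a b
  have hEe : ∀ m, Ebody lam mu mu0 a b (2*m+2) = -c1 := by
    intro m; rw [Ebody_even lam mu mu0 a b ha' hb' m, hc1]; ring
  have hEo : ∀ m, Ebody lam mu mu0 a b (2*m+3) = -c2 := by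
    intro m; rw [Ebody_odd lam mu mu0 a b ha' hb' m, hc2]; ring
  have hinv : 1 ≤ a⁻¹ := by
    nlinarith [mul_inv_cancel₀ ha', inv_pos.mpr ha0,
      mul_pos (sub_pos.mpr ha1) (inv_pos.mpr ha0)]
  have hbound : ∀ i : {n : ℕ // 1 ≤ n},
      Ebody lam mu mu0 a b i.val ≤ -(min c1 c2) := by
    rintro ⟨i, hi⟩
    have hdec : i = 1 ∨ (∃ m, i = 2*m+2) ∨ (∃ m, i = 2*m+3) := by
      rcases Nat.even_or_odd i with ⟨m, hm⟩ | ⟨m, hm⟩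
      · exact Or.inr (Or.inl ⟨m-1, by omega⟩)
      · rcases eq_or_ne i 1 with h | h
        · exact Or.inl h
        · exact Or.inr (Or.inr ⟨m-1, by omega⟩)
    rcases hdec with h | ⟨m, h⟩ | ⟨m, h⟩
    · subst h; simp only [hE1]
      have hm2 : min c1 c2 ≤ c2 := min_le_right _ _
      have h0 : 0 ≤ mu0 * (a⁻¹ - 1) := mul_nonneg hmu0.le (by linarith)
      rw [hc2] at hm2; nlinarith
    · subst h; rw [hEe m]; exact neg_le_neg (min_le_left _ _)
    · subst h; rw [hEo m]; exact neg_le_neg (min_le_right _ _)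
  have hne : Nonempty {n : ℕ // 1 ≤ n} := ⟨⟨1, le_refl 1⟩⟩
  have hbdd : BddAbove (Set.range fun i : {n : ℕ // 1 ≤ n} =>
      Ebody lam mu mu0 a b i.val) :=
    ⟨-(min c1 c2), by rintro x ⟨i, rfl⟩; exact hbound i⟩
  have hgoal : (⨆ i : {n : ℕ // 1 ≤ n}, Ebody lam mu mu0 a b i.val)
      = -(min c1 c2) := by
    apply le_antisymm (ciSup_le hbound)
    rcases min_cases c1 c2 with ⟨hm, _⟩ | ⟨hm, _⟩
    · rw [hm]
      have h2 : Ebody lam mu mu0 a b 2 = -c1 := by have := hEe 0; norm_num at this; exact this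
      calc -c1 = Ebody lam mu mu0 a b ((⟨2, by omega⟩ : {n : ℕ // 1 ≤ n}) : {n : ℕ // 1 ≤ n}).val := h2.symm
        _ ≤ _ := le_ciSup hbdd ⟨2, by omega⟩
    · rw [hm]
      have h3 : Ebody lam mu mu0 a b 3 = -c2 := by have := hEo 0; norm_num at this; exact this
      calc -c2 = Ebody lam mu mu0 a b ((⟨3, by omega⟩ : {n : ℕ // 1 ≤ n}) : {n : ℕ // 1 ≤ n}).val := h3.symm
        _ ≤ _ := le_ciSup hbdd ⟨3, by omega⟩
  exact hgoal
end

section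
/- Let λ, μ, μ₀ > 0 with μμ₀ < λ(λ+μ₀). Then as (a,b) range over all pairs with 0 < a, b < 1, the supremum of ζ(a,b) = min(λ(1−ab) − μ(b⁻¹−1), λ(1−b) − μ₀(a⁻¹−1)) is strictly positive. -/
set_option maxHeartbeats 1000000


theorem stmt_16 (lam mu mu0 : ℝ) (hlam : 0 < lam) (hmu : 0 < mu) (hmu0 : 0 < mu0)
    (h : mu * mu0 < lam * (lam + mu0)) :
    0 < ⨆ p : {p : ℝ × ℝ // 0 < p.1 ∧ p.1 < 1 ∧ 0 < p.2 ∧ p.2 < 1},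
        min (lam * (1 - p.val.1 * p.val.2) - mu * ((p.val.2)⁻¹ - 1))
          (lam * (1 - p.val.2) - mu0 * ((p.val.1)⁻¹ - 1)) := by
  set D := lam * (lam + mu0) - mu * mu0 with hDdef
  have hD : 0 < D := by linarith
  set t := min (1/2 : ℝ) (D / (2 * lam ^ 2)) with htdef
  have ht0 : 0 < t := lt_min (by norm_num) (by positivity)
  have ht1 : t ≤ 1/2 := min_le_left _ _
  have htD : t * lam ^ 2 ≤ D / 2 := by
    have h1 : t ≤ D / (2 * lam ^ 2) := min_le_right _ _
    have h2 : (0:ℝ) < lam ^ 2 := by positivity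
    calc t * lam ^ 2 ≤ (D / (2 * lam ^ 2)) * lam ^ 2 := by nlinarith
      _ = D / 2 := by field_simp
  set s := 1 - t with hsdef
  have hs0 : 1/2 ≤ s := by simp only [hsdef]; linarith
  have hsp : 0 < s := by linarith
  have hs1 : s < 1 := by simp only [hsdef]; linarith
  set M := D - t * lam ^ 2 with hMdef
  have hM : 0 < M := by linarith
  have hMeq : M = lam * mu0 + s * lam ^ 2 - mu * mu0 := by
    simp only [hMdef, hDdef, hsdef]; ring
  set C := s * lam ^ 2 + lam * mu0 + mu * s * lam with hCdef
  have hC : 0 < C := by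
    nlinarith [mul_pos hsp (pow_pos hlam 2), mul_pos hlam hmu0,
      mul_pos (mul_pos hmu hsp) hlam]
  have hMC : M < C := by
    nlinarith [mul_pos hmu hmu0, mul_pos (mul_pos hmu hsp) hlam]
  set ε := M / (2 * C) with hεdef
  have hε0 : 0 < ε := by positivity
  have hε1 : ε < 1/2 := by
    rw [hεdef, div_lt_iff₀ (by positivity)]; linarith
  have hεC : ε * (2 * C) = M := by
    rw [hεdef]; field_simp
  set b := 1 - ε with hbdef
  have hb0 : 0 < b := by simp only [hbdef]; linarith
  have hb1 : b < 1 := by simp only [hbdef]; linarith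
  have hslε : 0 < s * lam * ε := by positivity
  have hden : 0 < mu0 + s * lam * ε := by linarith
  set a := mu0 / (mu0 + s * lam * ε) with hadef
  have ha0 : 0 < a := by positivity
  have ha1 : a < 1 := by
    rw [hadef, div_lt_one hden]; linarith
  have hainv : a⁻¹ = (mu0 + s * lam * ε) / mu0 := by
    rw [hadef, inv_div]
  have hbinv : b⁻¹ = 1 / (1 - ε) := by
    rw [hbdef, one_div]
  -- value at the witness point: second component
  have key2 : lam * (1 - b) - mu0 * (a⁻¹ - 1) = lam * ε * t := by
    rw [hainv, hbdef]
    field_simp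
    simp only [hsdef]
    ring
  have key2pos : 0 < lam * (1 - b) - mu0 * (a⁻¹ - 1) := by
    rw [key2]; positivity
  -- first component
  have key1pos : 0 < lam * (1 - a * b) - mu * (b⁻¹ - 1) := by
    rw [hbinv, hadef, hbdef]
    rw [show lam * (1 - mu0 / (mu0 + s * lam * ε) * (1 - ε)) - mu * (1 / (1 - ε) - 1)
        = (ε * (lam * (s * lam + mu0) * (1 - ε) - mu * (mu0 + s * lam * ε)))
          / ((mu0 + s * lam * ε) * (1 - ε)) from by
      have hne : (1:ℝ) - ε ≠ 0 := by linarith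
      field_simp
      ring]
    apply div_pos _ (mul_pos hden (by linarith : (0:ℝ) < 1 - ε))
    apply mul_pos hε0
    -- lam*(s*lam+mu0)*(1-ε) - mu*(mu0+s*lam*ε) = M - ε*C = M/2
    have : lam * (s * lam + mu0) * (1 - ε) - mu * (mu0 + s * lam * ε)
        = M - ε * C := by
      rw [hMeq, hCdef]; ring
    rw [this]
    have hεC2 : ε * C = M / 2 := by rw [hεdef]; field_simp
    linarith
  have hbdd : BddAbove (Set.range fun p : {p : ℝ × ℝ // 0 < p.1 ∧ p.1 < 1 ∧ 0 < p.2 ∧ p.2 < 1} =>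
      min (lam * (1 - p.val.1 * p.val.2) - mu * ((p.val.2)⁻¹ - 1))
        (lam * (1 - p.val.2) - mu0 * ((p.val.1)⁻¹ - 1))) := by
    refine ⟨lam, ?_⟩
    rintro x ⟨⟨⟨a', b'⟩, ha', h1', hb', h2'⟩, rfl⟩
    refine le_trans (min_le_right _ _) ?_
    simp only
    have hinv : a' * a'⁻¹ = 1 := mul_inv_cancel₀ (ne_of_gt ha')
    have h3 : (1:ℝ) ≤ a'⁻¹ := by nlinarith [inv_pos.mpr ha']
    nlinarith [mul_pos hlam hb', mul_nonneg hmu0.le (by linarith : (0:ℝ) ≤ a'⁻¹ - 1)]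
  exact lt_of_lt_of_le (lt_min key1pos key2pos)
    (le_ciSup hbdd ⟨(a, b), ha0, ha1, hb0, hb1⟩)
end

section
/- Let λ, μ, μ₀ > 0. If there exist a, b > 0 with ab > 1, λ + μ₀ − μ/b > 0 and λ + μ − λ(b+ab) − μ₀/a > 0, then μμ₀ > λ(λ+μ₀). -/
/-! Clearing denominators, the two weight conditions say
`μ < (λ + μ₀) b` and `μ₀ + λ a (b + a b - 1) < a μ`. Eliminating `μ` between them leaves
`(a b - 1)(μ₀ - λ a) > 0`, so `μ₀ > λ a`. Multiplying the second inequality by `μ₀` and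
using `μ₀ > λ a` twice, together with `a b > 1`, gives `a μ μ₀ > a λ (λ + μ₀)`. -/

section Weights

variable {lam mu mu0 a b : ℝ}

lemma mu_lt_of_weight_b (hb : 0 < b) (hwb : 0 < lam + mu0 - mu / b) :
    mu < (lam + mu0) * b :=
  (div_lt_iff₀ hb).mp (by linarith)

lemma lt_mul_mu_of_weight_a (ha : 0 < a) (hwa : 0 < lam + mu - lam * (b + a * b) - mu0 / a) :
    mu0 + lam * a * (b + a * b - 1) < a * mu := by
  have h : mu0 < (lam + mu - lam * (b + a * b)) * a := (div_lt_iff₀ ha).mp (by linarith)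
  linarith

lemma lam_mul_lt_of_weights (ha : 0 < a) (hab : 1 < a * b)
    (hup : mu < (lam + mu0) * b) (hlow : mu0 + lam * a * (b + a * b - 1) < a * mu) :
    lam * a < mu0 := by
  have hscaled : lam * a * (a * b - 1) < mu0 * (a * b - 1) := by
    nlinarith [mul_lt_mul_of_pos_left hup ha]
  exact lt_of_mul_lt_mul_right hscaled (by linarith)

lemma lam_mul_lt_mu_mul_of_weights (hlam : 0 < lam) (ha : 0 < a) (hab : 1 < a * b)
    (hup : mu < (lam + mu0) * b) (hlow : mu0 + lam * a * (b + a * b - 1) < a * mu) :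
    lam * (lam + mu0) < mu * mu0 := by
  have hla : lam * a < mu0 := lam_mul_lt_of_weights ha hab hup hlow
  have hmu0 : 0 < mu0 := (mul_pos hlam ha).trans hla
  have hb : 0 < b := pos_of_mul_pos_right (one_pos.trans hab) ha.le
  have hscaled : a * (lam * (lam + mu0)) < a * (mu * mu0) := by
    nlinarith [mul_lt_mul_of_pos_right hlow hmu0, mul_lt_mul_of_pos_right hla hmu0,
      mul_lt_mul_of_pos_left hla (mul_pos hlam (mul_pos ha hb)),
      mul_pos (mul_pos hmu0 hlam) (mul_pos ha (sub_pos.mpr hab))]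
  exact lt_of_mul_lt_mul_left hscaled ha.le

end Weights

theorem stmt_17_general (lam mu mu0 : ℝ) (hlam : 0 < lam)
    (h : ∃ a b : ℝ, 0 < a ∧ 0 < b ∧ 1 < a * b ∧
      0 < lam + mu0 - mu / b ∧ 0 < lam + mu - lam * (b + a * b) - mu0 / a) :
    mu * mu0 > lam * (lam + mu0) := by
  obtain ⟨a, b, ha, hb, hab, hwb, hwa⟩ := h
  exact lam_mul_lt_mu_mul_of_weights hlam ha hab (mu_lt_of_weight_b hb hwb)
    (lt_mul_mu_of_weight_a ha hwa)

theorem stmt_17 (lam mu mu0 : ℝ) (hlam : 0 < lam) (hmu : 0 < mu) (hmu0 : 0 < mu0)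
    (h : ∃ a b : ℝ, 0 < a ∧ 0 < b ∧ 1 < a * b ∧
      0 < lam + mu0 - mu / b ∧ 0 < lam + mu - lam * (b + a * b) - mu0 / a) :
    mu * mu0 > lam * (lam + mu0) :=
  stmt_17_general lam mu mu0 hlam h
end

section
/- Let λ, μ, μ₀ > 0 with μμ₀ > λ(λ+μ₀). Then the supremum over a, b > 0 with ab > 1 of α(a,b) = min(λ + μ₀ − μ/b, λ + μ − λ(b+ab) − μ₀/a) is strictly positive. -/
theorem stmt_18 (lam mu mu0 : ℝ) (hlam : 0 < lam) (hmu : 0 < mu) (hmu0 : 0 < mu0)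
    (h : mu * mu0 > lam * (lam + mu0)) :
    0 < ⨆ p : {p : ℝ × ℝ // 0 < p.1 ∧ 0 < p.2 ∧ 1 < p.1 * p.2},
        min (lam + mu0 - mu / p.val.2)
          (lam + mu - lam * (p.val.2 + p.val.1 * p.val.2) - mu0 / p.val.1) := by
  set A := lam + mu0 with hA
  have hApos : 0 < A := by positivity
  obtain ⟨q, hqdef⟩ : ∃ q : ℝ, q = Real.sqrt (mu0 * A / (lam * mu)) := ⟨_, rfl⟩
  have hqpos : 0 < q := hqdef ▸ Real.sqrt_pos.mpr (by positivity)
  have hq2 : q ^ 2 = mu0 * A / (lam * mu) := hqdef ▸ Real.sq_sqrt (by positivity)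
  have hq2' : lam * mu * q ^ 2 = mu0 * A := by
    rw [hq2]; field_simp
  have ht : (lam * mu * q) ^ 2 = (lam * A) * (mu * mu0) := by
    linear_combination (lam * mu) * hq2'
  have hd : 0 < (mu * mu0 - lam * A) ^ 2 := pow_pos (by linarith) 2
  have h2t : (2 * (lam * mu * q)) ^ 2 < (lam * A + mu * mu0) ^ 2 := by nlinarith [ht, hd]
  have hamgm : 2 * (lam * mu * q) < lam * A + mu * mu0 :=
    lt_of_pow_lt_pow_left₀ 2 (by positivity) h2t
  have hkey : mu0 / q = lam * mu * q / A := by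
    rw [div_eq_div_iff hqpos.ne' hApos.ne']
    linear_combination -hq2'
  obtain ⟨G, hG⟩ : ∃ G : ℝ, G = lam + mu - lam * (1 + q) * (mu / A) - mu0 / q := ⟨_, rfl⟩
  have hGpos : 0 < G := by
    rw [hG, hkey]
    have heq : lam + mu - lam * (1 + q) * (mu / A) - lam * mu * q / A
        = (lam * A + mu * mu0 - 2 * (lam * mu * q)) / A := by
      field_simp [hA]; ring
    rw [heq]
    exact div_pos (by linarith) hApos
  obtain ⟨ε, hε⟩ : ∃ ε : ℝ, ε = G / (2 * lam * (1 + q)) := ⟨_, rfl⟩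
  have hεpos : 0 < ε := hε ▸ div_pos hGpos (by positivity)
  obtain ⟨b, hb⟩ : ∃ b : ℝ, b = mu / A + ε := ⟨_, rfl⟩
  have hbpos : 0 < b := by rw [hb]; positivity
  have hab : 1 < q * b := by
    have hsq : A ^ 2 < (q * mu) ^ 2 := by nlinarith [hq2', hApos, h]
    have hAlt : A < q * mu := lt_of_pow_lt_pow_left₀ 2 (by positivity) hsq
    have h1 : 1 < q * (mu / A) := by
      rw [show q * (mu / A) = q * mu / A from by ring]
      exact (one_lt_div hApos).mpr hAlt
    calc 1 < q * (mu / A) := h1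
      _ ≤ q * b := by
          apply mul_le_mul_of_nonneg_left _ hqpos.le
          rw [hb]; linarith
  have hfirst : 0 < lam + mu0 - mu / b := by
    have hlt : mu / b < A := by
      rw [div_lt_iff₀ hbpos, hb]
      have hexp : A * (mu / A + ε) = mu + A * ε := by field_simp
      nlinarith [mul_pos hApos hεpos, hexp]
    linarith [hlt]
  have hsecond : 0 < lam + mu - lam * (b + q * b) - mu0 / q := by
    have hlε : lam * (1 + q) * ε = G / 2 := by
      rw [hε]; field_simp
    have heq : lam + mu - lam * (b + q * b) - mu0 / q = G - lam * (1 + q) * ε := by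
      rw [hG, hb]; ring
    rw [heq, hlε]; linarith
  have hbdd : BddAbove (Set.range fun p : {p : ℝ × ℝ // 0 < p.1 ∧ 0 < p.2 ∧ 1 < p.1 * p.2} =>
      min (lam + mu0 - mu / p.val.2)
        (lam + mu - lam * (p.val.2 + p.val.1 * p.val.2) - mu0 / p.val.1)) := by
    refine ⟨lam + mu0, ?_⟩
    rintro x ⟨p, rfl⟩
    refine (min_le_left _ _).trans ?_
    have : 0 ≤ mu / p.val.2 := le_of_lt (div_pos hmu p.prop.2.1)
    linarith
  have hwit : (0 : ℝ) < min (lam + mu0 - mu / b)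
      (lam + mu - lam * (b + q * b) - mu0 / q) := lt_min hfirst hsecond
  exact lt_of_lt_of_le hwit (le_ciSup hbdd ⟨(q, b), hqpos, hbpos, hab⟩)
end
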